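/- arXiv:1911.07476 — 4 statements merged into one kernel-verified Lean document; each statement's English description precedes it below -/
import Mathlib

section
/- Let n ≥ 3 and let R : Fin n → Fin n → Fin n → ℝ be a family of reals R^l_{jk} antisymmetric in the lower indices (R^l_{jk} = -R^l_{kj}). If for every symmetric matrix b : Fin n → Fin n → ℝ one has ∑_m (b_{im} R^m_{jk} + b_{km} R^m_{ij} + b_{jm} R^m_{ki}) = 0 for all i,j,k, then there exists ξ : Fin n → ℝ such that R^l_{jk} = ξ_j δ^l_k − ξ_k δ^l_j for all l,j,k. -/
/-!
Testing the cyclic identity against the symmetric matrices `E_qq` and `E_ik + E_ki` shows that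
`R^q_{jk} = 0` whenever `q ∉ {j, k}`, and that `R^k_{jk}` does not depend on the choice of
`k ≠ j`; calling this common value `ξ_j`, antisymmetry determines all remaining components.
-/

namespace Curvature

variable {ι 𝕜 : Type*}

def CyclicAgainstSymmetric [Fintype ι] [CommRing 𝕜] (R : ι → ι → ι → 𝕜) : Prop :=
  ∀ b : ι → ι → 𝕜, (∀ i m, b i m = b m i) →
    ∀ i j k, ∑ m, (b i m * R m j k + b k m * R m i j + b j m * R m k i) = 0

open Classical in
/-- `R^k_{jk}` for some `k ≠ j`; for cyclic `R` it does not depend on `k`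
(`apply_eq_sectionalCoeff`). Junk value `0` if `ι = {j}`. -/
noncomputable def sectionalCoeff [Zero 𝕜] (R : ι → ι → ι → 𝕜) (j : ι) : 𝕜 :=
  if h : ∃ k, k ≠ j then R h.choose j h.choose else 0

namespace CyclicAgainstSymmetric

variable [Fintype ι] [DecidableEq ι] [CommRing 𝕜] {R : ι → ι → ι → 𝕜}

theorem apply_eq_zero (hR : CyclicAgainstSymmetric R) {q j k : ι} (hj : j ≠ q) (hk : k ≠ q) :
    R q j k = 0 := by
  have h := hR (fun a m => if a = q ∧ m = q then 1 else 0) (fun _ _ => by simp only [and_comm])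
    q j k
  simpa [hj, hk] using h

theorem apply_add_apply_eq_zero (hR : CyclicAgainstSymmetric R) {i j k : ι}
    (hij : i ≠ j) (hkj : k ≠ j) (hik : i ≠ k) : R k j k + R i i j = 0 := by
  have h := hR (fun a m => if a = i ∧ m = k ∨ a = k ∧ m = i then 1 else 0)
    (fun _ _ => by simp only [and_comm, or_comm]) i j k
  simpa [Finset.sum_add_distrib, hij.symm, hkj.symm, hik, hik.symm] using h

theorem apply_eq_sectionalCoeff (hR : CyclicAgainstSymmetric R)
    (hanti : ∀ l j k, R l j k = -R l k j) {j k : ι} (hkj : k ≠ j) :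
    R k j k = sectionalCoeff R j := by
  have hex : ∃ k, k ≠ j := ⟨k, hkj⟩
  rw [sectionalCoeff, dif_pos hex]
  by_cases hk : hex.choose = k
  · rw [hk]
  · have hk' := hR.apply_add_apply_eq_zero hex.choose_spec hkj hk
    rw [hanti hex.choose hex.choose j] at hk'
    linear_combination hk'

theorem eq_sectionalCoeff_mul_sub [NoZeroDivisors 𝕜] [CharZero 𝕜]
    (hR : CyclicAgainstSymmetric R) (hanti : ∀ l j k, R l j k = -R l k j) (l j k : ι) :
    R l j k = sectionalCoeff R j * (if l = k then 1 else 0)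
      - sectionalCoeff R k * (if l = j then 1 else 0) := by
  rcases eq_or_ne j k with rfl | hjk
  · simpa using self_eq_neg.mp (hanti l j j)
  rcases eq_or_ne l k with rfl | hlk
  · simpa [hjk.symm] using hR.apply_eq_sectionalCoeff hanti hjk.symm
  rcases eq_or_ne l j with rfl | hlj
  · simpa [hlk, hanti l l k] using hR.apply_eq_sectionalCoeff hanti hlk
  simpa [hlk, hlj] using hR.apply_eq_zero (Ne.symm hlj) (Ne.symm hlk)

end CyclicAgainstSymmetric

end Curvature

theorem stmt_0_general (n : ℕ) (R : Fin n → Fin n → Fin n → ℝ)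
    (hanti : ∀ l j k, R l j k = - R l k j)
    (hb : ∀ b : Fin n → Fin n → ℝ, (∀ i m, b i m = b m i) →
      ∀ i j k, ∑ m, (b i m * R m j k + b k m * R m i j + b j m * R m k i) = 0) :
    ∃ ξ : Fin n → ℝ, ∀ l j k,
      R l j k = ξ j * (if l = k then 1 else 0) - ξ k * (if l = j then 1 else 0) :=
  ⟨Curvature.sectionalCoeff R,
    Curvature.CyclicAgainstSymmetric.eq_sectionalCoeff_mul_sub hb hanti⟩

theorem stmt_0 (n : ℕ) (hn : 3 ≤ n) (R : Fin n → Fin n → Fin n → ℝ)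
    (hanti : ∀ l j k, R l j k = - R l k j)
    (hb : ∀ b : Fin n → Fin n → ℝ, (∀ i m, b i m = b m i) →
      ∀ i j k, ∑ m, (b i m * R m j k + b k m * R m i j + b j m * R m k i) = 0) :
    ∃ ξ : Fin n → ℝ, ∀ l j k,
      R l j k = ξ j * (if l = k then 1 else 0) - ξ k * (if l = j then 1 else 0) :=
  stmt_0_general n R hanti hb
end

section
/- Let n ≥ 3, let J : ℝ^{2n} → ℝ^{2n} be J(h,v) = (0,h), let ξ be a linear form on ℝ^{2n} vanishing on the vertical subspace {0}×ℝ^n, and define the vector-valued 2-form K(x,y) = ξ(x) J(y) − ξ(y) J(x). Then for every alternating bilinear form ω on ℝ^{2n} satisfying ω(Jx,y) + ω(x,Jy) = 0 for all x,y, the trilinear alternating form i_K ω(x,y,z) := ω(K(x,y),z) + ω(K(z,x),y) + ω(K(y,z),x) vanishes identically. -/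
/-! For `K = ξ ∧ J` one has `i_K ω = ξ ∧ i_J ω`, where `(i_J ω)(a, b) = ω(Ja, b) + ω(a, Jb)`,
so `i_K ω` vanishes as soon as `i_J ω` does. -/

namespace LinearMap.IsAlt

theorem cyclicSum_apply_wedge_smul {R M : Type*} [CommRing R] [AddCommGroup M] [Module R M]
    {ω : M →ₗ[R] M →ₗ[R] R} (hω : ω.IsAlt) (ξ : M → R) (J : M → M) (x y z : M) :
    ω (ξ x • J y - ξ y • J x) z + ω (ξ z • J x - ξ x • J z) y + ω (ξ y • J z - ξ z • J y) x =
      ξ x * (ω (J y) z + ω y (J z)) + ξ y * (ω (J z) x + ω z (J x)) +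
        ξ z * (ω (J x) y + ω x (J y)) := by
  simp only [map_sub, map_smul, LinearMap.sub_apply, LinearMap.smul_apply, smul_eq_mul,
    ← hω.neg (J _)]
  ring

end LinearMap.IsAlt

theorem stmt_12_general (n : ℕ)
    (J : ((Fin n → ℝ) × (Fin n → ℝ)) → ((Fin n → ℝ) × (Fin n → ℝ)))
    (ξ : ((Fin n → ℝ) × (Fin n → ℝ)) →ₗ[ℝ] ℝ)
    (K : ((Fin n → ℝ) × (Fin n → ℝ)) → ((Fin n → ℝ) × (Fin n → ℝ)) →
      ((Fin n → ℝ) × (Fin n → ℝ)))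
    (hK : ∀ x y, K x y = ξ x • J y - ξ y • J x) :
    ∀ ω : ((Fin n → ℝ) × (Fin n → ℝ)) →ₗ[ℝ] ((Fin n → ℝ) × (Fin n → ℝ)) →ₗ[ℝ] ℝ,
      (∀ x, ω x x = 0) → (∀ x y, ω (J x) y + ω x (J y) = 0) →
      ∀ x y z, ω (K x y) z + ω (K z x) y + ω (K y z) x = 0 := by
  intro ω hω hJω x y z
  simp only [hK, LinearMap.IsAlt.cyclicSum_apply_wedge_smul hω, hJω, mul_zero, add_zero]

theorem stmt_12 (n : ℕ) (hn : 3 ≤ n)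
    (J : ((Fin n → ℝ) × (Fin n → ℝ)) → ((Fin n → ℝ) × (Fin n → ℝ)))
    (hJ : ∀ p : (Fin n → ℝ) × (Fin n → ℝ), J p = (0, p.1))
    (ξ : ((Fin n → ℝ) × (Fin n → ℝ)) →ₗ[ℝ] ℝ)
    (hξ : ∀ v : Fin n → ℝ, ξ (0, v) = 0)
    (K : ((Fin n → ℝ) × (Fin n → ℝ)) → ((Fin n → ℝ) × (Fin n → ℝ)) →
      ((Fin n → ℝ) × (Fin n → ℝ)))
    (hK : ∀ x y, K x y = ξ x • J y - ξ y • J x) :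
    ∀ ω : ((Fin n → ℝ) × (Fin n → ℝ)) →ₗ[ℝ] ((Fin n → ℝ) × (Fin n → ℝ)) →ₗ[ℝ] ℝ,
      (∀ x, ω x x = 0) → (∀ x y, ω (J x) y + ω x (J y) = 0) →
      ∀ x y z, ω (K x y) z + ω (K z x) y + ω (K y z) x = 0 :=
  stmt_12_general n J ξ K hK
end

section
/- Let n ≥ 3 and suppose R̃^l_{jk} = ζ_j δ^l_k − ζ_k δ^l_j − c_{jk} y^l, where ζ, y : Fin n → ℝ, y ≠ 0, and c is antisymmetric (c_{jk} = −c_{kj}). If R̃ satisfies the constant-curvature algebraic identity, i.e. for all symmetric b, ∑_m (b_{im} R̃^m_{jk} + b_{km} R̃^m_{ij} + b_{jm} R̃^m_{ki}) = 0, then c_{jk} y^l belongs to the span of tensors of the form α_j δ^l_k − α_k δ^l_j, i.e. there exists α : Fin n → ℝ with c_{jk} y^l = α_j δ^l_k − α_k δ^l_j for all l, j, k. -/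
theorem stmt_15 (n : ℕ) (hn : 3 ≤ n) (ζ y : Fin n → ℝ) (hy : y ≠ 0)
    (c : Fin n → Fin n → ℝ) (hc : ∀ j k, c j k = - c k j)
    (R' : Fin n → Fin n → Fin n → ℝ)
    (hR' : ∀ l j k, R' l j k = ζ j * (if l = k then 1 else 0) -
      ζ k * (if l = j then 1 else 0) - c j k * y l)
    (hb : ∀ b : Fin n → Fin n → ℝ, (∀ i m, b i m = b m i) →
      ∀ i j k, ∑ m, (b i m * R' m j k + b k m * R' m i j + b j m * R' m k i) = 0) :
    ∃ α : Fin n → ℝ, ∀ l j k,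
      c j k * y l = α j * (if l = k then 1 else 0) - α k * (if l = j then 1 else 0) := by
  obtain ⟨p, hp⟩ : ∃ p, y p ≠ 0 := by
    by_contra h
    push_neg at h
    exact hy (funext h)
  -- general cyclic relation for any symmetric b
  have key : ∀ b : Fin n → Fin n → ℝ, (∀ i m, b i m = b m i) → ∀ i j k,
      c j k * (∑ m, b i m * y m) + c i j * (∑ m, b k m * y m)
        + c k i * (∑ m, b j m * y m) = 0 := by
    intro b hbsym i j k
    have aux : ∀ a u v : Fin n, ∑ m, b a m * R' m u v =
        ζ u * b a v - ζ v * b a u - c u v * ∑ m, b a m * y m := by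
      intro a u v
      have h1 : ∀ m, b a m * R' m u v =
          (if m = v then b a m * ζ u else 0) - (if m = u then b a m * ζ v else 0)
            - c u v * (b a m * y m) := by
        intro m
        rw [hR']
        split_ifs <;> ring
      simp only [h1]
      rw [Finset.sum_sub_distrib, Finset.sum_sub_distrib, Finset.sum_ite_eq',
        Finset.sum_ite_eq', ← Finset.mul_sum]
      simp [mul_comm]
    have h := hb b hbsym i j k
    rw [Finset.sum_add_distrib, Finset.sum_add_distrib, aux, aux, aux] at h
    rw [hbsym k j, hbsym k i, hbsym j i] at h
    linarith
  -- specialization to b a m = δ_{ai} δ_{mp} + δ_{ap} δ_{mi}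
  have spec : ∀ i j k : Fin n,
      c j k * ((if i = i then y p else 0) + (if i = p then y i else 0))
      + c i j * ((if k = i then y p else 0) + (if k = p then y i else 0))
      + c k i * ((if j = i then y p else 0) + (if j = p then y i else 0)) = 0 := by
    intro i j k
    have hbsym : ∀ a m : Fin n,
        ((if a = i then (1:ℝ) else 0) * (if m = p then (1:ℝ) else 0)
          + (if a = p then (1:ℝ) else 0) * (if m = i then (1:ℝ) else 0)) =
        ((if m = i then (1:ℝ) else 0) * (if a = p then (1:ℝ) else 0)
          + (if m = p then (1:ℝ) else 0) * (if a = i then (1:ℝ) else 0)) := by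
      intro a m; ring
    have h := key (fun a m => (if a = i then (1:ℝ) else 0) * (if m = p then (1:ℝ) else 0)
      + (if a = p then (1:ℝ) else 0) * (if m = i then (1:ℝ) else 0)) hbsym i j k
    have hsum : ∀ a : Fin n,
        (∑ m, ((if a = i then (1:ℝ) else 0) * (if m = p then (1:ℝ) else 0)
          + (if a = p then (1:ℝ) else 0) * (if m = i then (1:ℝ) else 0)) * y m) =
        (if a = i then y p else 0) + (if a = p then y i else 0) := by
      intro a
      have h2 : ∀ m, ((if a = i then (1:ℝ) else 0) * (if m = p then (1:ℝ) else 0)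
          + (if a = p then (1:ℝ) else 0) * (if m = i then (1:ℝ) else 0)) * y m =
          (if m = p then (if a = i then (1:ℝ) else 0) * y m else 0)
          + (if m = i then (if a = p then (1:ℝ) else 0) * y m else 0) := by
        intro m
        split_ifs <;> ring
      simp only [h2]
      rw [Finset.sum_add_distrib, Finset.sum_ite_eq', Finset.sum_ite_eq']
      simp only [Finset.mem_univ, if_true]
      split_ifs <;> ring
    rw [hsum i, hsum k, hsum j] at h
    exact h
  -- first: c j k = 0 when p ∉ {j, k}
  have step1 : ∀ j k : Fin n, p ≠ j → p ≠ k → c j k = 0 := by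
    intro j k hpj hpk
    have h := spec p j k
    simp [Ne.symm hpj, Ne.symm hpk] at h
    rcases h with h' | h'
    · exact h'
    · exact absurd h' hp
  -- case p = j, j ≠ k
  have step2 : ∀ j k : Fin n, p = j → j ≠ k → c j k = 0 := by
    intro j k hpj hjk
    subst hpj
    obtain ⟨i, hij, hik⟩ : ∃ i : Fin n, i ≠ p ∧ i ≠ k := by
      by_contra h
      push_neg at h
      have hsub : (Finset.univ : Finset (Fin n)) ⊆ {p, k} := by
        intro i _
        rcases eq_or_ne i p with h1 | h1
        · simp [h1]
        · simp [h i h1]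
      have hcard := Finset.card_le_card hsub
      have h2 : ({p, k} : Finset (Fin n)).card ≤ 2 :=
        (Finset.card_insert_le _ _).trans (by simp)
      simp only [Finset.card_univ, Fintype.card_fin] at hcard
      omega
    have h := spec i p k
    simp [Ne.symm hij, hij, Ne.symm hik, hjk, Ne.symm hjk] at h
    -- h : c p k * y p + c k i * y i = 0 (possibly in some simp-normal form)
    have hcki : c k i = 0 := step1 k i hjk (Ne.symm hij)
    rw [hcki] at h
    have h' : c p k * y p = 0 := by linarith
    rcases mul_eq_zero.mp h' with h'' | h''
    · exact h''
    · exact absurd h'' hp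
  have hczero : ∀ j k, c j k = 0 := by
    intro j k
    rcases eq_or_ne j k with h | h
    · have := hc j k; rw [h] at this ⊢; linarith
    · rcases eq_or_ne p j with h1 | h1
      · exact step2 j k h1 h
      · rcases eq_or_ne p k with h2 | h2
        · have := step2 k j h2 (Ne.symm h)
          rw [hc j k, this, neg_zero]
        · exact step1 j k h1 h2
  exact ⟨0, fun l j k => by simp [hczero]⟩
end

section
/- Let n ≥ 3, y : Fin n → ℝ nonzero, and c : Fin n → Fin n → ℝ antisymmetric. If there exists α : Fin n → ℝ such that c_{jk} y^l = α_j δ^l_k − α_k δ^l_j for all l,j,k ∈ Fin n, then c = 0 and α = 0. -/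
/-!
Fix `l₀` with `y l₀ ≠ 0`. Whenever `l ∉ {j, k}` the relation reads `c j k * y l = 0`, while for
`l = k ≠ j` it reads `c j k * y k = α j`. For `j ≠ l₀`, a third index `k ∉ {j, l₀}` (here `n ≥ 3`
is needed) gives `c j k = 0`, hence `α j = 0`; for `j = l₀` and any `k ≠ l₀`, the relation at
`l = l₀` gives `c l₀ k * y l₀ = -α k = 0`, hence again `α l₀ = c l₀ k * y k = 0`. Once `α = 0`,
the relation at `l = l₀` forces `c = 0`.
-/

namespace WedgeDelta

variable {ι R : Type*} [DecidableEq ι] [Ring R]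

/-- `c ⊗ y = α ∧ δ`, in components. -/
def MulEq (c : ι → ι → R) (y α : ι → R) : Prop :=
  ∀ l j k : ι, c j k * y l = α j * (if l = k then 1 else 0) - α k * (if l = j then 1 else 0)

variable {c : ι → ι → R} {y α : ι → R}

theorem mul_eq_zero_of_ne_of_ne (h : MulEq c y α) {l j k : ι} (hlj : l ≠ j) (hlk : l ≠ k) :
    c j k * y l = 0 := by
  simpa [hlj, hlk] using h l j k

theorem coeff_mul_self_right (h : MulEq c y α) {j k : ι} (hkj : k ≠ j) : c j k * y k = α j := by
  simpa [hkj] using h k j k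

theorem coeff_mul_self_left (h : MulEq c y α) {j k : ι} (hjk : j ≠ k) : c j k * y j = -α k := by
  simpa [hjk] using h j j k

variable [NoZeroDivisors R]

theorem oneForm_apply_eq_zero_of_ne (h : MulEq c y α) (hι : ∀ a b : ι, ∃ l, l ≠ a ∧ l ≠ b)
    {l₀ : ι} (hl₀ : y l₀ ≠ 0) {j : ι} (hj : j ≠ l₀) : α j = 0 := by
  obtain ⟨k, hkj, hkl₀⟩ := hι j l₀
  have hc : c j k = 0 :=
    (mul_eq_zero.mp (mul_eq_zero_of_ne_of_ne h hj.symm (Ne.symm hkl₀))).resolve_right hl₀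
  rw [← coeff_mul_self_right h hkj, hc, zero_mul]

theorem oneForm_eq_zero (h : MulEq c y α) (hι : ∀ a b : ι, ∃ l, l ≠ a ∧ l ≠ b) (hy : y ≠ 0) :
    α = 0 := by
  obtain ⟨l₀, hl₀⟩ : ∃ l, y l ≠ 0 := Function.ne_iff.mp hy
  funext j
  by_cases hj : j = l₀
  · subst hj
    obtain ⟨k, hkj, -⟩ := hι j j
    have hc : c j k = 0 := by
      refine (mul_eq_zero.mp ?_).resolve_right hl₀
      rw [coeff_mul_self_left h (Ne.symm hkj), oneForm_apply_eq_zero_of_ne h hι hl₀ hkj, neg_zero]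
    rw [Pi.zero_apply, ← coeff_mul_self_right h hkj, hc, zero_mul]
  · exact oneForm_apply_eq_zero_of_ne h hι hl₀ hj

theorem coeff_eq_zero (h : MulEq c y α) (hι : ∀ a b : ι, ∃ l, l ≠ a ∧ l ≠ b) (hy : y ≠ 0)
    (j k : ι) : c j k = 0 := by
  obtain ⟨l₀, hl₀⟩ : ∃ l, y l ≠ 0 := Function.ne_iff.mp hy
  have hα := oneForm_eq_zero h hι hy
  exact (mul_eq_zero.mp (by simpa [hα] using h l₀ j k)).resolve_right hl₀

end WedgeDelta

theorem stmt_16_general (n : ℕ) (hn : 3 ≤ n) (y : Fin n → ℝ) (hy : y ≠ 0)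
    (c : Fin n → Fin n → ℝ)
    (α : Fin n → ℝ)
    (h : ∀ l j k : Fin n,
      c j k * y l = α j * (if l = k then 1 else 0) - α k * (if l = j then 1 else 0)) :
    (∀ j k, c j k = 0) ∧ α = 0 := by
  have hι : ∀ a b : Fin n, ∃ l, l ≠ a ∧ l ≠ b :=
    ENat.exists_ne_ne_of_three_le (by simpa using hn)
  exact ⟨WedgeDelta.coeff_eq_zero h hι hy, WedgeDelta.oneForm_eq_zero h hι hy⟩

theorem stmt_16 (n : ℕ) (hn : 3 ≤ n) (y : Fin n → ℝ) (hy : y ≠ 0)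
    (c : Fin n → Fin n → ℝ) (hc : ∀ j k, c j k = - c k j)
    (α : Fin n → ℝ)
    (h : ∀ l j k : Fin n,
      c j k * y l = α j * (if l = k then 1 else 0) - α k * (if l = j then 1 else 0)) :
    (∀ j k, c j k = 0) ∧ α = 0 :=
  stmt_16_general n hn y hy c α h
end
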